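/- For every positive integer p, there exists a finite simple graph G such that G admits a proper colouring with 7p colours, G contains no induced path on 5 vertices, and the reconfiguration graph of the 8p-colourings of G is disconnected (i.e., G is (7p)-colourable, P5-free, and not (8p)-mixing). -/

import Mathlib

/-- `G` is `P5`-free: there are no five distinct vertices whose induced edges are exactly
the four consecutive edges of a path on them. -/
def P5Free {V : Type*} (G : SimpleGraph V) : Prop :=
  ¬ ∃ v : Fin 5 → V, Function.Injective v ∧
      ∀ i j : Fin 5, G.Adj (v i) (v j) ↔ (i.val + 1 = j.val ∨ j.val + 1 = i.val)

/-- The reconfiguration graph `R_k(G)`: vertices are the proper `k`-colourings of `G`,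
two colourings being adjacent iff they differ in colour on exactly one vertex. -/
def Recfg {V : Type*} (G : SimpleGraph V) (k : ℕ) :
    SimpleGraph {f : V → Fin k // ∀ v w, G.Adj v w → f v ≠ f w} where
  Adj f g := ∃! v, f.1 v ≠ g.1 v
  symm := by
    constructor
    rintro f g ⟨v, hv, hu⟩
    exact ⟨v, hv.symm, fun w hw => hu w hw.symm⟩
  loopless := by
    constructor
    rintro f ⟨v, hv, -⟩
    exact hv rfl

/-!
The graph `base` on `{0, 1} × ℤ/8` has a frozen `8`-colouring (every vertex sees all
seven other colours), so that colouring is an isolated vertex of `R₈(base)`; yet `base` is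
`7`-colourable and has no induced `2K₂`, hence no induced `P₅`. Joining `p` copies keeps all
three properties with `7p` and `8p` colours: vertices in different copies are adjacent, so an
induced `2K₂` must lie in one copy, and each copy uses its own palette.
-/

variable {V W ι α β : Type*}

def IsProperColoring (G : SimpleGraph V) (f : V → α) : Prop :=
  ∀ v w, G.Adj v w → f v ≠ f w

def IsFrozenColoring (G : SimpleGraph V) (f : V → α) : Prop :=
  ∀ v c, c ≠ f v → ∃ w, G.Adj v w ∧ f w = c

/-- The four vertices of an induced `2K₂` are automatically distinct. -/
def TwoK2Free (G : SimpleGraph V) : Prop :=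
  ∀ a b c d, G.Adj a b → G.Adj c d →
    ¬G.Adj a c → ¬G.Adj a d → ¬G.Adj b c → ¬G.Adj b d → False

section Transfer

variable {G : SimpleGraph V}

theorem IsProperColoring.comp_left {f : V → α} (hf : IsProperColoring G f) {g : α → β}
    (hg : Function.Injective g) : IsProperColoring G (g ∘ f) :=
  fun v w hvw h => hf v w hvw (hg h)

theorem IsProperColoring.comap {f : V → α} (hf : IsProperColoring G f) (φ : W → V) :
    IsProperColoring (G.comap φ) (f ∘ φ) :=
  fun v w hvw => hf (φ v) (φ w) hvw

theorem IsFrozenColoring.equiv_comp {f : V → α} (hf : IsFrozenColoring G f) (e : α ≃ β) :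
    IsFrozenColoring G (e ∘ f) := by
  intro v c hc
  obtain ⟨w, hvw, hw⟩ := hf v (e.symm c) fun h => hc (by simp [← h])
  exact ⟨w, hvw, by simp [hw]⟩

theorem IsFrozenColoring.comap {f : V → α} (hf : IsFrozenColoring G f) {φ : W → V}
    (hφ : Function.Surjective φ) : IsFrozenColoring (G.comap φ) (f ∘ φ) := by
  intro v c hc
  obtain ⟨w, hvw, hw⟩ := hf (φ v) c hc
  obtain ⟨w, rfl⟩ := hφ w
  exact ⟨w, hvw, hw⟩

theorem IsFrozenColoring.surjective [Nonempty V] {f : V → α} (hf : IsFrozenColoring G f) :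
    Function.Surjective f := by
  intro c
  obtain ⟨v⟩ := ‹Nonempty V›
  by_cases hc : c = f v
  · exact ⟨v, hc.symm⟩
  · obtain ⟨w, -, hw⟩ := hf v c hc
    exact ⟨w, hw⟩

theorem TwoK2Free.comap (hG : TwoK2Free G) (φ : W → V) : TwoK2Free (G.comap φ) :=
  fun a b c d => hG (φ a) (φ b) (φ c) (φ d)

/-- Vertices `0, 1, 3, 4` of an induced `P₅` span an induced `2K₂`. -/
theorem TwoK2Free.p5Free (hG : TwoK2Free G) : P5Free G := by
  rintro ⟨v, -, hv⟩
  exact hG (v 0) (v 1) (v 3) (v 4) ((hv 0 1).2 (by decide)) ((hv 3 4).2 (by decide))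
    (fun h => by simpa using (hv 0 3).1 h) (fun h => by simpa using (hv 0 4).1 h)
    (fun h => by simpa using (hv 1 3).1 h) (fun h => by simpa using (hv 1 4).1 h)

end Transfer

section Reconfiguration

variable {G : SimpleGraph V} {k : ℕ} {f : V → Fin k}

/-- Any colour `v` could switch to is already used by a neighbour `w`, and `w` keeps its colour
in a single step. -/
theorem IsFrozenColoring.not_adj_recfg (hfr : IsFrozenColoring G f)
    (hf : IsProperColoring G f) (g) : ¬(Recfg G k).Adj ⟨f, hf⟩ g := by
  rintro ⟨v, hv, hunique⟩
  obtain ⟨w, hvw, hw⟩ := hfr v (g.1 v) (Ne.symm hv)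
  have hgw : g.1 w = f w := by
    by_contra h
    exact hvw.ne (hunique w fun h' => h h'.symm).symm
  exact g.2 v w hvw (hw.symm.trans hgw.symm)

theorem IsFrozenColoring.not_connected_recfg [Nonempty V] (hk : 2 ≤ k)
    (hfr : IsFrozenColoring G f) (hf : IsProperColoring G f) : ¬(Recfg G k).Connected := by
  intro hconn
  obtain ⟨v⟩ := ‹Nonempty V›
  have : Nontrivial (Fin k) := Fin.nontrivial_iff_two_le.2 hk
  obtain ⟨c, hc⟩ := exists_ne (f v)
  let g : V → Fin k := Equiv.swap (f v) c ∘ f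
  have hg : IsProperColoring G g := hf.comp_left (Equiv.injective _)
  have hne :
      (⟨f, hf⟩ : {f : V → Fin k // ∀ v w, G.Adj v w → f v ≠ f w}) ≠ ⟨g, hg⟩ :=
    fun h => hc (by simpa [g] using (congrFun (congrArg Subtype.val h) v).symm)
  obtain ⟨walk⟩ := hconn.preconnected ⟨f, hf⟩ ⟨g, hg⟩
  exact hfr.not_adj_recfg hf _ (walk.adj_snd (SimpleGraph.Walk.not_nil_of_ne hne))

end Reconfiguration

section Join

def joinCopies (ι : Type*) (H : SimpleGraph V) : SimpleGraph (ι × V) where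
  Adj a b := a.1 ≠ b.1 ∨ (a.1 = b.1 ∧ H.Adj a.2 b.2)
  symm := ⟨fun _ _ h => h.imp Ne.symm fun h => ⟨h.1.symm, h.2.symm⟩⟩
  loopless := ⟨fun _ h => h.elim (· rfl) fun h => H.loopless.irrefl _ h.2⟩

variable {H : SimpleGraph V} {c : V → α}

theorem joinCopies_adj_of_fst_eq {a b : ι × V} (h : a.1 = b.1) :
    (joinCopies ι H).Adj a b ↔ H.Adj a.2 b.2 := by
  simp [joinCopies, h]

theorem joinCopies_not_adj {a b : ι × V} :
    ¬(joinCopies ι H).Adj a b ↔ a.1 = b.1 ∧ ¬H.Adj a.2 b.2 := by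
  simp only [joinCopies]
  tauto

theorem IsProperColoring.joinCopies (hc : IsProperColoring H c) :
    IsProperColoring (joinCopies ι H) fun a => (a.1, c a.2) := by
  rintro a b (h | ⟨-, h⟩) hab
  · exact h (Prod.ext_iff.1 hab).1
  · exact hc _ _ h (Prod.ext_iff.1 hab).2

theorem IsFrozenColoring.joinCopies [Nonempty V] (hc : IsFrozenColoring H c) :
    IsFrozenColoring (joinCopies ι H) fun a => (a.1, c a.2) := by
  rintro a ⟨i, x⟩ hx
  by_cases hi : i = a.1
  · subst hi
    obtain ⟨w, haw, hw⟩ := hc a.2 x fun h => hx (by rw [h])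
    exact ⟨(a.1, w), (joinCopies_adj_of_fst_eq (a := a) (b := (a.1, w)) rfl).2 haw,
      by simp [hw]⟩
  · obtain ⟨w, hw⟩ := hc.surjective x
    exact ⟨(i, w), Or.inl (Ne.symm hi), by simp [hw]⟩

theorem TwoK2Free.joinCopies (hH : TwoK2Free H) : TwoK2Free (joinCopies ι H) := by
  intro a b c d hab hcd hac had hbc hbd
  rw [joinCopies_not_adj] at hac had hbc hbd
  have hab' : a.1 = b.1 := hac.1.trans hbc.1.symm
  exact hH a.2 b.2 c.2 d.2 ((joinCopies_adj_of_fst_eq hab').1 hab)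
    ((joinCopies_adj_of_fst_eq (hac.1.symm.trans had.1)).1 hcd) hac.2 had.2 hbc.2 hbd.2

end Join

section Base

/-- On `Fin 2 × ℤ/8`, level `0` is the complement of the `8`-cycle, level `1` is `K₄,₄`
between the parity classes, and `(0, x)`, `(1, y)` are adjacent iff `x ≠ y`. -/
def base : SimpleGraph (Fin 2 × Fin 8) where
  Adj a b :=
    if a.1 = b.1 then
      if a.1 = 0 then b.2 - a.2 ∉ ({0, 1, -1} : Finset (Fin 8)) else (b.2 - a.2).val % 2 = 1
    else a.2 ≠ b.2
  symm := ⟨by decide⟩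
  loopless := ⟨by decide⟩

instance : DecidableRel base.Adj := fun a b => by unfold base; infer_instance

def baseSevenColoring (a : Fin 2 × Fin 8) : Fin 7 :=
  if a.1 = 0 then ⟨a.2.val / 2, by omega⟩ else ⟨4 + a.2.val % 2, by omega⟩

theorem base_isProperColoring_sevenColoring : IsProperColoring base baseSevenColoring := by
  unfold IsProperColoring; decide

theorem base_isProperColoring_snd : IsProperColoring base Prod.snd := by
  unfold IsProperColoring; decide

theorem base_isFrozenColoring_snd : IsFrozenColoring base Prod.snd := by
  unfold IsFrozenColoring; decide

theorem base_twoK2Free : TwoK2Free base := by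
  have : ∀ a b, base.Adj a b → ∀ c, ¬base.Adj a c → ¬base.Adj b c →
      ∀ d, base.Adj c d → base.Adj a d ∨ base.Adj b d := by decide
  exact fun a b c d hab hcd hac had hbc hbd => (this a b hab c hac hbc d hcd).elim had hbd

end Base

theorem statement0 (p : ℕ) (hp : 0 < p) :
    ∃ (n : ℕ) (G : SimpleGraph (Fin n)),
      (∃ f : Fin n → Fin (7 * p), ∀ v w, G.Adj v w → f v ≠ f w) ∧
      P5Free G ∧
      ¬ (Recfg G (8 * p)).Connected := by
  have : NeZero p := ⟨hp.ne'⟩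
  let e := (Fintype.equivFin (Fin p × (Fin 2 × Fin 8))).symm
  let palette (k : ℕ) : Fin p × Fin k ≃ Fin (k * p) :=
    finProdFinEquiv.trans (finCongr (mul_comm p k))
  refine ⟨_, (joinCopies (Fin p) base).comap e,
    ⟨palette 7 ∘ (fun a => (a.1, baseSevenColoring a.2)) ∘ e, ?_⟩, ?_, ?_⟩
  · exact (base_isProperColoring_sevenColoring.joinCopies.comp_left (palette 7).injective).comap e
  · exact (base_twoK2Free.joinCopies.comap e).p5Free
  · refine IsFrozenColoring.not_connected_recfg (by omega)
      ((base_isFrozenColoring_snd.joinCopies.equiv_comp (palette 8)).comap e.surjective) ?_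
    exact (base_isProperColoring_snd.joinCopies.comp_left (palette 8).injective).comap e
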